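/- Assume x₀ has full orbit under G, G acts nontrivially on x₀, and fix a subgroup sequence {1} = G₀ < G₁ < ⋯ < G_m = G with coset leader sets CL_k. Then the following are equivalent: (i) for every g ∈ G every greedy run on the received vector g⁻¹x₀ has output equal to g; (ii) for every 1 ≤ k < m every induced coset leader in CL(G/G_k) is minimal. Moreover, when these hold there exists δ > 0 such that for every g ∈ G and every r with ‖r − g⁻¹x₀‖ < δ, every greedy run on r has output equal to g. -/

import Mathlib

open Set
open scoped Pointwise

noncomputable section

namespace GroupCode

variable {V : Type*} [NormedAddCommGroup V] [InnerProductSpace ℂ V]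

/-- The group of linear isometries of a complex inner product space. -/
abbrev Iso (V : Type*) [NormedAddCommGroup V] [InnerProductSpace ℂ V] := V ≃ₗᵢ[ℂ] V

/-- The stabilizer (isotropy) of `x₀` inside a subgroup `H`. -/
def Stab (x₀ : V) (H : Subgroup (Iso V)) : Set (Iso V) := {h | h ∈ H ∧ h x₀ = x₀}

/-- The fundamental region of a subgroup `H`. -/
def FR (x₀ : V) (H : Subgroup (Iso V)) : Set V :=
  {x | ∀ h ∈ H, h ∉ Stab x₀ H → ‖x - x₀‖ < ‖h x - x₀‖}

/-- The decoding region of a group element `g ∈ G`. -/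
def DR (x₀ : V) (G : Subgroup (Iso V)) (g : Iso V) : Set V :=
  {x | ∀ a ∈ G, a ∉ Stab x₀ G * ({g} : Set (Iso V)) → ‖g x - x₀‖ < ‖a x - x₀‖}

/-- `CL` is a set of coset leaders for `K` over `H`: a subset of `K` containing `1` and
exactly one element of each left coset of `H` in `K`. -/
def IsCosetLeaders (H K : Subgroup (Iso V)) (CL : Set (Iso V)) : Prop :=
  CL ⊆ (K : Set (Iso V)) ∧ (1 : Iso V) ∈ CL ∧ ∀ a ∈ K, ∃! c, c ∈ CL ∧ c⁻¹ * a ∈ H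

/-- Greed compatibility of a set of coset leaders for `K` over `H`. -/
def GreedCompatible (x₀ : V) (H K : Subgroup (Iso V)) (CL : Set (Iso V)) : Prop :=
  ∀ x ∈ FR x₀ H, ∃ c ∈ CL, c x ∈ FR x₀ K

/-- A coset leader `c` of `K` over `H` is minimal if `x₀ ∈ c(FR(H))`. -/
def Minimal (x₀ : V) (H : Subgroup (Iso V)) (c : Iso V) : Prop :=
  x₀ ∈ ⇑c '' FR x₀ H

/-- A coset leader `c` of `K` over `H` is region minimal if `FR(K) ⊆ c(FR(H))`. -/
def RegionMinimal (x₀ : V) (H K : Subgroup (Iso V)) (c : Iso V) : Prop :=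
  FR x₀ K ⊆ ⇑c '' FR x₀ H

/-- The product `d_k ⋯ d_1`. -/
def pprod {α : Type*} [Monoid α] (d : ℕ → α) (k : ℕ) : α :=
  (List.range k).foldl (fun acc j => d (j + 1) * acc) 1

/-- The product `cs_ℓ ⋯ cs_{k+1}` of induced coset leaders. -/
def pprodRange {α : Type*} [Monoid α] (cs : ℕ → α) (k ℓ : ℕ) : α :=
  (List.range (ℓ - k)).foldl (fun acc j => cs (k + 1 + j) * acc) 1

/-- A greedy run of the subgroup decoding algorithm on a received vector `r`:
at each step `k`, `d k ∈ CL k` minimizes the distance of `d (d_{k-1} ⋯ d_1 r)` to `x₀`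
over all `d ∈ CL k`. -/
def IsGreedyRun (x₀ : V) (CL : ℕ → Set (Iso V)) (m : ℕ) (r : V) (d : ℕ → Iso V) : Prop :=
  ∀ k < m, d (k + 1) ∈ CL (k + 1) ∧
    ∀ e ∈ CL (k + 1), ‖(d (k + 1)) ((pprod d k) r) - x₀‖ ≤ ‖e ((pprod d k) r) - x₀‖

end GroupCode

/-!
Every `g ∈ G` factors uniquely as `b_m ⋯ b_1` with `b_i ∈ CL_i`, and after `k` correct steps a
run on `g⁻¹ x₀` sits at `(b_m ⋯ b_{k+1})⁻¹ x₀`; minimality of `b_m ⋯ b_{k+1}` says exactly that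
this point lies in `FR(G_k)`. Under minimality the correct leader is therefore the strict greedy
choice at every step, since any other leader differs from it by a nontrivial element of
`G_{k+1}` acting on a point of `FR(G_{k+1})`. As `G` is finite, the distances `‖a x₀ - x₀‖`,
`a ∈ G`, are separated by a gap `γ > 0`, so these strict choices survive a perturbation of the
received vector of size `γ / 2`.

Conversely, if decoding without noise is correct, every greedy choice is strict: after a tie, the
run taking the other minimizer would give a second factorization of the same output. Hence the
distance to `x₀` drops at every nontrivial step. Decoding `h (b_m ⋯ b_{k+1})⁻¹ x₀` for
`1 ≠ h ∈ G_k`, whose first `k` steps multiply to `h⁻¹`, then shows that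
`(b_m ⋯ b_{k+1})⁻¹ x₀` is strictly closer to `x₀` than its image under `h`.
-/

theorem Set.Finite.exists_pos_add_le_of_lt {S : Set ℝ} (hS : S.Finite) :
    ∃ γ > 0, ∀ s ∈ S, ∀ t ∈ S, s < t → s + γ ≤ t := by
  set P : Set ℝ := insert 1 ((fun p : ℝ × ℝ => p.2 - p.1) '' {p | p ∈ S ×ˢ S ∧ p.1 < p.2})
  have hP : P.Finite := (((hS.prod hS).subset fun _ hp => hp.1).image _).insert 1
  have hpos : ∀ x ∈ P, 0 < x := by
    rintro x (rfl | ⟨p, ⟨-, hp⟩, rfl⟩)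
    exacts [one_pos, sub_pos.2 hp]
  obtain ⟨γ, hγ, hmin⟩ := Set.exists_min_image P id hP ⟨1, Set.mem_insert _ _⟩
  refine ⟨γ, hpos γ hγ, fun s hs t ht hst => ?_⟩
  have := hmin (t - s) (Or.inr ⟨(s, t), ⟨⟨hs, ht⟩, hst⟩, rfl⟩)
  simp only [id] at this
  linarith

theorem Isometry.dist_lt_of_add_two_mul_lt {α : Type*} [PseudoMetricSpace α] {e f : α → α}
    (he : Isometry e) (hf : Isometry f) {p x z : α}
    (h : dist (f x) p + 2 * dist z x < dist (e x) p) : dist (f z) p < dist (e z) p := by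
  have h₁ := dist_triangle (f z) (f x) p
  have h₂ := dist_triangle (e x) (e z) p
  rw [hf.dist_eq] at h₁
  rw [he.dist_eq, dist_comm x] at h₂
  linarith

namespace GroupCode

section Products

variable {α : Type*}

def IsLeaderSeq (CL : ℕ → Set α) (k ℓ : ℕ) (b : ℕ → α) : Prop :=
  ∀ i, k < i → i ≤ ℓ → b i ∈ CL i

theorem IsLeaderSeq.mono {CL : ℕ → Set α} {b : ℕ → α} {k k' ℓ ℓ' : ℕ}
    (hb : IsLeaderSeq CL k ℓ b) (hk : k ≤ k') (hℓ : ℓ' ≤ ℓ) : IsLeaderSeq CL k' ℓ' b :=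
  fun i hi hi' => hb i (by omega) (by omega)

variable [Monoid α]

theorem pprodRange_of_le (b : ℕ → α) {k ℓ : ℕ} (h : ℓ ≤ k) : pprodRange b k ℓ = 1 := by
  simp [pprodRange, Nat.sub_eq_zero_of_le h]

theorem pprodRange_succ (b : ℕ → α) {k ℓ : ℕ} (h : k ≤ ℓ) :
    pprodRange b k (ℓ + 1) = b (ℓ + 1) * pprodRange b k ℓ := by
  simp only [pprodRange, Nat.sub_add_comm h, List.range_succ, List.foldl_append,
    List.foldl_cons, List.foldl_nil]
  rw [show k + 1 + (ℓ - k) = ℓ + 1 by omega]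

theorem pprod_eq_pprodRange_zero (b : ℕ → α) (k : ℕ) : pprod b k = pprodRange b 0 k := by
  simp [pprod, pprodRange, Nat.add_comm 1]

@[simp] theorem pprod_zero (b : ℕ → α) : pprod b 0 = 1 := rfl

theorem pprod_succ (b : ℕ → α) (k : ℕ) : pprod b (k + 1) = b (k + 1) * pprod b k := by
  simp only [pprod_eq_pprodRange_zero, pprodRange_succ b k.zero_le]

theorem pprodRange_congr {b b' : ℕ → α} {k ℓ : ℕ} (h : ∀ i, k < i → i ≤ ℓ → b i = b' i) :
    pprodRange b k ℓ = pprodRange b' k ℓ := by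
  induction ℓ with
  | zero => simp only [pprodRange_of_le _ k.zero_le]
  | succ ℓ ih =>
    rcases le_or_gt (ℓ + 1) k with hle | hlt
    · simp only [pprodRange_of_le _ hle]
    · rw [pprodRange_succ _ (by omega), pprodRange_succ _ (by omega), h (ℓ + 1) hlt le_rfl,
        ih fun i hi hi' => h i hi (by omega)]

theorem pprod_congr {b b' : ℕ → α} {k : ℕ} (h : ∀ i, 0 < i → i ≤ k → b i = b' i) :
    pprod b k = pprod b' k := by
  simp only [pprod_eq_pprodRange_zero, pprodRange_congr h]

theorem pprod_eq_one {b : ℕ → α} {k : ℕ} (h : ∀ i, 0 < i → i ≤ k → b i = 1) :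
    pprod b k = 1 := by
  induction k with
  | zero => rfl
  | succ k ih =>
    rw [pprod_succ, h (k + 1) k.succ_pos le_rfl, one_mul, ih fun i hi hi' => h i hi (by omega)]

theorem pprodRange_mul_pprod (b : ℕ → α) {k ℓ : ℕ} (h : k ≤ ℓ) :
    pprodRange b k ℓ * pprod b k = pprod b ℓ := by
  induction ℓ, h using Nat.le_induction with
  | base => simp [pprodRange_of_le]
  | succ ℓ hkℓ ih => rw [pprodRange_succ b hkℓ, pprod_succ, mul_assoc, ih]

theorem pprodRange_mem_of_forall_mem {G : Type*} [Group G] {H : ℕ → Subgroup G} {b : ℕ → G}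
    {k ℓ : ℕ} (hH : ∀ i < ℓ, H i ≤ H (i + 1)) (hb : ∀ i, k < i → i ≤ ℓ → b i ∈ H i) :
    pprodRange b k ℓ ∈ H ℓ := by
  induction ℓ with
  | zero => simp [pprodRange_of_le _ k.zero_le]
  | succ ℓ ih =>
    rcases le_or_gt (ℓ + 1) k with hle | hlt
    · simp [pprodRange_of_le _ hle]
    · rw [pprodRange_succ _ (by omega)]
      exact mul_mem (hb (ℓ + 1) hlt le_rfl) <| hH ℓ ℓ.lt_succ_self <|
        ih (fun i hi => hH i (by omega)) fun i hi hi' => hb i hi (by omega)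

end Products

section Factorization

variable {V : Type*} [NormedAddCommGroup V] [InnerProductSpace ℂ V]
  {Gs : ℕ → Subgroup (Iso V)} {CL : ℕ → Set (Iso V)} {m : ℕ}

theorem mem_of_mem_leaders (hCL : ∀ i < m, IsCosetLeaders (Gs i) (Gs (i + 1)) (CL (i + 1)))
    {i : ℕ} (hi : 0 < i) (hi' : i ≤ m) {c : Iso V} (hc : c ∈ CL i) : c ∈ Gs i := by
  obtain ⟨j, rfl⟩ := Nat.exists_eq_add_one_of_ne_zero hi.ne'
  exact (hCL j (by omega)).1 hc

theorem one_mem_leaders (hCL : ∀ i < m, IsCosetLeaders (Gs i) (Gs (i + 1)) (CL (i + 1)))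
    {i : ℕ} (hi : 0 < i) (hi' : i ≤ m) : (1 : Iso V) ∈ CL i := by
  obtain ⟨j, rfl⟩ := Nat.exists_eq_add_one_of_ne_zero hi.ne'
  exact (hCL j (by omega)).2.1

theorem IsLeaderSeq.pprodRange_mem {b : ℕ → Iso V} {k ℓ : ℕ}
    (hmono : ∀ i < m, Gs i ≤ Gs (i + 1))
    (hCL : ∀ i < m, IsCosetLeaders (Gs i) (Gs (i + 1)) (CL (i + 1)))
    (hb : IsLeaderSeq CL k ℓ b) (hℓ : ℓ ≤ m) : pprodRange b k ℓ ∈ Gs ℓ :=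
  pprodRange_mem_of_forall_mem (fun i hi => hmono i (by omega)) fun i hi hi' =>
    mem_of_mem_leaders hCL (by omega) (by omega) (hb i hi hi')

theorem IsLeaderSeq.pprod_mem {b : ℕ → Iso V} {k : ℕ}
    (hmono : ∀ i < m, Gs i ≤ Gs (i + 1))
    (hCL : ∀ i < m, IsCosetLeaders (Gs i) (Gs (i + 1)) (CL (i + 1)))
    (hb : IsLeaderSeq CL 0 k b) (hk : k ≤ m) : pprod b k ∈ Gs k :=
  pprod_eq_pprodRange_zero b k ▸ hb.pprodRange_mem hmono hCL hk

theorem subgroup_le_of_le (hmono : ∀ i < m, Gs i ≤ Gs (i + 1)) {k ℓ : ℕ} (hkℓ : k ≤ ℓ)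
    (hℓ : ℓ ≤ m) : Gs k ≤ Gs ℓ := by
  induction ℓ, hkℓ using Nat.le_induction with
  | base => exact le_rfl
  | succ ℓ _ ih => exact (ih (by omega)).trans (hmono ℓ (by omega))

theorem leaders_finite_nonempty (hfin : (Gs m : Set (Iso V)).Finite)
    (hmono : ∀ i < m, Gs i ≤ Gs (i + 1))
    (hCL : ∀ i < m, IsCosetLeaders (Gs i) (Gs (i + 1)) (CL (i + 1))) :
    ∀ i, 0 < i → i ≤ m → (CL i).Finite ∧ (CL i).Nonempty := fun _ hi hi' =>
  ⟨hfin.subset fun _ hc => subgroup_le_of_le hmono hi' le_rfl (mem_of_mem_leaders hCL hi hi' hc),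
    ⟨1, one_mem_leaders hCL hi hi'⟩⟩

theorem exists_isLeaderSeq_pprod_eq (hG0 : Gs 0 = ⊥)
    (hCL : ∀ i < m, IsCosetLeaders (Gs i) (Gs (i + 1)) (CL (i + 1)))
    {k : ℕ} (hk : k ≤ m) {a : Iso V} (ha : a ∈ Gs k) :
    ∃ b, IsLeaderSeq CL 0 k b ∧ pprod b k = a := by
  induction k generalizing a with
  | zero =>
    rw [hG0, Subgroup.mem_bot] at ha
    exact ⟨fun _ => 1, fun i hi hi' => by omega, by simp [ha]⟩
  | succ k ih =>
    obtain ⟨c, ⟨hc, hca⟩, -⟩ := (hCL k hk).2.2 a ha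
    obtain ⟨b, hb, hba⟩ := ih (by omega) hca
    refine ⟨Function.update b (k + 1) c, fun i hi hi' => ?_, ?_⟩
    · rcases eq_or_ne i (k + 1) with rfl | hne
      · simpa using hc
      · simpa [hne] using hb i hi (by omega)
    · rw [pprod_succ, Function.update_self,
        pprod_congr (b' := b) fun i _ hi => Function.update_of_ne (by omega) _ _, hba,
        mul_inv_cancel_left]

theorem IsLeaderSeq.eq_of_pprod_eq (hmono : ∀ i < m, Gs i ≤ Gs (i + 1))
    (hCL : ∀ i < m, IsCosetLeaders (Gs i) (Gs (i + 1)) (CL (i + 1)))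
    {k : ℕ} (hk : k ≤ m) {b b' : ℕ → Iso V} (hb : IsLeaderSeq CL 0 k b)
    (hb' : IsLeaderSeq CL 0 k b') (h : pprod b k = pprod b' k) :
    ∀ i, 0 < i → i ≤ k → b i = b' i := by
  induction k with
  | zero => intro i hi hi'; omega
  | succ k ih =>
    have hrest : ∀ {c : ℕ → Iso V}, IsLeaderSeq CL 0 (k + 1) c →
        c (k + 1) ∈ CL (k + 1) ∧ (c (k + 1))⁻¹ * pprod c (k + 1) ∈ Gs k := fun {c} hc =>
      ⟨hc (k + 1) k.succ_pos le_rfl, by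
        simpa [pprod_succ] using (hc.mono le_rfl k.le_succ).pprod_mem hmono hCL (by omega)⟩
    obtain ⟨c, -, huniq⟩ := (hCL k (by omega)).2.2 (pprod b (k + 1))
      (hb.pprod_mem hmono hCL hk)
    have htop : b (k + 1) = b' (k + 1) := (huniq _ (hrest hb)).trans (huniq _ (h ▸ hrest hb')).symm
    have hlow : pprod b k = pprod b' k := by
      rw [pprod_succ, pprod_succ, htop] at h
      exact mul_left_cancel h
    intro i hi hi'
    rcases eq_or_lt_of_le hi' with rfl | hlt
    · exact htop
    · exact ih (by omega) (hb.mono le_rfl k.le_succ) (hb'.mono le_rfl k.le_succ) hlow i hi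
        (by omega)

theorem exists_isLeaderSeq_pprod_eq_mul (hG0 : Gs 0 = ⊥)
    (hCL : ∀ i < m, IsCosetLeaders (Gs i) (Gs (i + 1)) (CL (i + 1)))
    {k : ℕ} (hk : k ≤ m) {cs : ℕ → Iso V} (hcs : IsLeaderSeq CL k m cs) {a : Iso V}
    (ha : a ∈ Gs k) :
    ∃ b, IsLeaderSeq CL 0 m b ∧ pprod b k = a ∧ pprod b m = pprodRange cs k m * a := by
  classical
  obtain ⟨b, hb, hba⟩ := exists_isLeaderSeq_pprod_eq hG0 hCL hk ha
  have hlow : pprod (fun i => if i ≤ k then b i else cs i) k = a := by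
    rw [← hba]; exact pprod_congr fun i _ hi => if_pos hi
  refine ⟨fun i => if i ≤ k then b i else cs i, fun i hi hi' => ?_, hlow, ?_⟩
  · by_cases hik : i ≤ k
    · simpa [hik] using hb i hi hik
    · simpa [hik] using hcs i (by omega) hi'
  · rw [← pprodRange_mul_pprod _ hk, hlow,
      pprodRange_congr fun i hi _ => if_neg (show ¬i ≤ k by omega)]

end Factorization

section Greedy

variable {V : Type*} [NormedAddCommGroup V] [InnerProductSpace ℂ V]
  {x₀ r : V} {CL : ℕ → Set (Iso V)} {d : ℕ → Iso V}

theorem IsGreedyRun.mono {k m : ℕ} (hd : IsGreedyRun x₀ CL m r d) (hk : k ≤ m) :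
    IsGreedyRun x₀ CL k r d :=
  fun i hi => hd i (by omega)

theorem IsGreedyRun.isLeaderSeq {m : ℕ} (hd : IsGreedyRun x₀ CL m r d) : IsLeaderSeq CL 0 m d := by
  intro i hi hi'
  obtain ⟨j, rfl⟩ := Nat.exists_eq_add_one_of_ne_zero hi.ne'
  exact (hd j (by omega)).1

theorem isGreedyRun_congr {m : ℕ} {d' : ℕ → Iso V} (h : ∀ i ≤ m, d i = d' i) :
    IsGreedyRun x₀ CL m r d ↔ IsGreedyRun x₀ CL m r d' := by
  refine forall₂_congr fun k hk => ?_
  rw [h (k + 1) hk, pprod_congr fun i _ hi => h i (by omega)]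

theorem IsGreedyRun.update {k : ℕ} (hd : IsGreedyRun x₀ CL k r d) {c : Iso V}
    (hc : c ∈ CL (k + 1))
    (hmin : ∀ e ∈ CL (k + 1), ‖c (pprod d k r) - x₀‖ ≤ ‖e (pprod d k r) - x₀‖) :
    IsGreedyRun x₀ CL (k + 1) r (Function.update d (k + 1) c) := by
  have hagree : ∀ i ≤ k, d i = Function.update d (k + 1) c i :=
    fun i hi => (Function.update_of_ne (by omega) _ _).symm
  intro i hi
  rcases Nat.lt_succ_iff_lt_or_eq.1 hi with hik | rfl
  · exact (isGreedyRun_congr hagree).1 hd i hik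
  · rw [Function.update_self, ← pprod_congr fun j _ hj => hagree j hj]
    exact ⟨hc, hmin⟩

theorem IsGreedyRun.exists_extend {k m : ℕ}
    (hleaders : ∀ i, k < i → i ≤ m → (CL i).Finite ∧ (CL i).Nonempty)
    (hd : IsGreedyRun x₀ CL k r d) (hkm : k ≤ m) :
    ∃ d', IsGreedyRun x₀ CL m r d' ∧ ∀ i ≤ k, d' i = d i := by
  induction m, hkm using Nat.le_induction with
  | base => exact ⟨d, hd, fun _ _ => rfl⟩
  | succ m hkm ih =>
    obtain ⟨d', hd', hagree⟩ := ih fun i hi hi' => hleaders i hi (by omega)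
    obtain ⟨hfin, hne⟩ := hleaders (m + 1) (by omega) le_rfl
    obtain ⟨c, hc, hmin⟩ :=
      Set.exists_min_image _ (fun e : Iso V => ‖e (pprod d' m r) - x₀‖) hfin hne
    exact ⟨_, hd'.update hc hmin, fun i hi => by
      rw [Function.update_of_ne (by omega), hagree i hi]⟩

theorem exists_isGreedyRun {m : ℕ}
    (hleaders : ∀ i, 0 < i → i ≤ m → (CL i).Finite ∧ (CL i).Nonempty) :
    ∃ d, IsGreedyRun x₀ CL m r d := by
  have hempty : IsGreedyRun x₀ CL 0 r 1 := fun _ h => absurd h (Nat.not_lt_zero _)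
  obtain ⟨d, hd, -⟩ := hempty.exists_extend hleaders m.zero_le
  exact ⟨d, hd⟩

theorem IsGreedyRun.norm_sub_antitone {m : ℕ} (hd : IsGreedyRun x₀ CL m r d)
    (hone : ∀ i, 0 < i → i ≤ m → (1 : Iso V) ∈ CL i) {i j : ℕ} (hij : i ≤ j) (hj : j ≤ m) :
    ‖pprod d j r - x₀‖ ≤ ‖pprod d i r - x₀‖ := by
  induction j, hij using Nat.le_induction with
  | base => exact le_rfl
  | succ j hij ih =>
    refine le_trans ?_ (ih (by omega))
    simpa [pprod_succ] using (hd j (by omega)).2 1 (hone (j + 1) j.succ_pos hj)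

end Greedy

section Regions

variable {V : Type*} [NormedAddCommGroup V] [InnerProductSpace ℂ V] {x₀ : V}

theorem minimal_iff {H : Subgroup (Iso V)} {c : Iso V} :
    Minimal x₀ H c ↔ c⁻¹ x₀ ∈ FR x₀ H := by
  rw [Minimal, LinearIsometryEquiv.image_eq_preimage_symm, LinearIsometryEquiv.coe_inv,
    Set.mem_preimage]

theorem self_mem_FR (H : Subgroup (Iso V)) : x₀ ∈ FR x₀ H := fun h hh hs => by
  rw [sub_self, norm_zero, norm_pos_iff, sub_ne_zero]
  exact fun hfix => hs ⟨hh, hfix⟩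

theorem norm_sub_lt_of_mem_FR {H : Subgroup (Iso V)} (hfree : ∀ h ∈ H, h x₀ = x₀ → h = 1)
    {x : V} (hx : x ∈ FR x₀ H) {h : Iso V} (hh : h ∈ H) (hne : h ≠ 1) :
    ‖x - x₀‖ < ‖h x - x₀‖ :=
  hx h hh fun hs => hne (hfree h hh hs.2)

theorem pprod_apply_inv_pprod (b : ℕ → Iso V) {k m : ℕ} (hk : k ≤ m) (x : V) :
    pprod b k ((pprod b m)⁻¹ x) = (pprodRange b k m)⁻¹ x := by
  rw [← pprodRange_mul_pprod b hk, mul_inv_rev]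
  exact DFunLike.congr_fun (mul_inv_cancel_left (pprod b k) _) x

end Regions

section Decoding

variable {V : Type*} [NormedAddCommGroup V] [InnerProductSpace ℂ V] {x₀ : V}
  {Gs : ℕ → Subgroup (Iso V)} {CL : ℕ → Set (Iso V)} {m : ℕ} {b : ℕ → Iso V}

def DecodesCorrectly (x₀ : V) (G : Subgroup (Iso V)) (CL : ℕ → Set (Iso V)) (m : ℕ) : Prop :=
  ∀ g ∈ G, ∀ d : ℕ → Iso V, IsGreedyRun x₀ CL m (g⁻¹ x₀) d → pprod d m = g

def InducedLeadersMinimal (x₀ : V) (Gs : ℕ → Subgroup (Iso V)) (CL : ℕ → Set (Iso V))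
    (m : ℕ) : Prop :=
  ∀ k, 1 ≤ k → k < m → ∀ cs : ℕ → Iso V, IsLeaderSeq CL k m cs →
    Minimal x₀ (Gs k) (pprodRange cs k m)

theorem pprod_apply_mem_FR (hMin : InducedLeadersMinimal x₀ Gs CL m)
    (hb : IsLeaderSeq CL 0 m b) {j : ℕ} (hj : 0 < j) (hjm : j ≤ m) :
    pprod b j ((pprod b m)⁻¹ x₀) ∈ FR x₀ (Gs j) := by
  rcases eq_or_lt_of_le hjm with rfl | hjm
  · rw [LinearIsometryEquiv.coe_inv, LinearIsometryEquiv.apply_symm_apply]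
    exact self_mem_FR _
  · rw [pprod_apply_inv_pprod b hjm.le, ← minimal_iff]
    exact hMin j hj hjm b (hb.mono j.zero_le le_rfl)

theorem norm_sub_lt_of_inducedLeadersMinimal (hfree : ∀ h ∈ Gs m, h x₀ = x₀ → h = 1)
    (hmono : ∀ i < m, Gs i ≤ Gs (i + 1))
    (hCL : ∀ i < m, IsCosetLeaders (Gs i) (Gs (i + 1)) (CL (i + 1)))
    (hMin : InducedLeadersMinimal x₀ Gs CL m) (hb : IsLeaderSeq CL 0 m b) {k : ℕ} (hk : k < m)
    {e : Iso V} (he : e ∈ CL (k + 1)) (hne : e ≠ b (k + 1)) :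
    ‖b (k + 1) (pprod b k ((pprod b m)⁻¹ x₀)) - x₀‖ < ‖e (pprod b k ((pprod b m)⁻¹ x₀)) - x₀‖ := by
  have hFR := pprod_apply_mem_FR hMin hb k.succ_pos hk
  have hmem : e * (b (k + 1))⁻¹ ∈ Gs (k + 1) :=
    mul_mem (mem_of_mem_leaders hCL k.succ_pos hk he)
      (inv_mem (mem_of_mem_leaders hCL k.succ_pos hk (hb (k + 1) k.succ_pos hk)))
  have := norm_sub_lt_of_mem_FR
    (fun h hh => hfree h (subgroup_le_of_le hmono hk le_rfl hh)) hFR hmem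
    (mul_inv_eq_one.not.2 hne)
  simpa [pprod_succ] using this

theorem eq_of_isGreedyRun_near (hfree : ∀ h ∈ Gs m, h x₀ = x₀ → h = 1)
    (hmono : ∀ i < m, Gs i ≤ Gs (i + 1))
    (hCL : ∀ i < m, IsCosetLeaders (Gs i) (Gs (i + 1)) (CL (i + 1)))
    (hMin : InducedLeadersMinimal x₀ Gs CL m) {γ : ℝ}
    (hγ : ∀ a ∈ Gs m, ∀ a' ∈ Gs m, ‖a x₀ - x₀‖ < ‖a' x₀ - x₀‖ → ‖a x₀ - x₀‖ + γ ≤ ‖a' x₀ - x₀‖)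
    (hb : IsLeaderSeq CL 0 m b) {r : V} (hr : 2 * ‖r - (pprod b m)⁻¹ x₀‖ < γ)
    {d : ℕ → Iso V} (hd : IsGreedyRun x₀ CL m r d) : ∀ i, 0 < i → i ≤ m → d i = b i := by
  suffices ∀ k ≤ m, ∀ i, 0 < i → i ≤ k → d i = b i from this m le_rfl
  intro k
  induction k with
  | zero => intro _ i hi hi'; omega
  | succ k ih =>
    intro hk i hi hi'
    obtain hik | rfl := Nat.lt_or_eq_of_le hi'
    · exact ih (by omega) i hi (by omega)
    by_contra hne
    have hpre : pprod d k = pprod b k := pprod_congr fun i hi hi' => ih (by omega) i hi hi'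
    set g := pprod b m
    set y := (pprod b k * g⁻¹) x₀
    have hle : ∀ {j}, j ≤ m → Gs j ≤ Gs m := fun hj => subgroup_le_of_le hmono hj le_rfl
    have hg : g ∈ Gs m := hb.pprod_mem hmono hCL le_rfl
    have hbk : pprod b k ∈ Gs m :=
      hle (by omega) ((hb.mono le_rfl (by omega)).pprod_mem hmono hCL (by omega))
    have hlead : ∀ {c}, c ∈ CL (k + 1) → c * (pprod b k * g⁻¹) ∈ Gs m := fun hc =>
      mul_mem (hle hk (mem_of_mem_leaders hCL k.succ_pos hk hc)) (mul_mem hbk (inv_mem hg))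
    have hstrict : ‖b (k + 1) y - x₀‖ < ‖d (k + 1) y - x₀‖ :=
      norm_sub_lt_of_inducedLeadersMinimal hfree hmono hCL hMin hb hk (hd k hk).1 hne
    have hgap : ‖b (k + 1) y - x₀‖ + γ ≤ ‖d (k + 1) y - x₀‖ :=
      hγ _ (hlead (hb (k + 1) k.succ_pos hk)) _ (hlead (hd k hk).1) hstrict
    have hnear : ‖pprod b k r - y‖ = ‖r - g⁻¹ x₀‖ := by
      rw [show y = pprod b k (g⁻¹ x₀) from rfl, ← map_sub, LinearIsometryEquiv.norm_map]
    have := (d (k + 1)).isometry.dist_lt_of_add_two_mul_lt (b (k + 1)).isometry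
      (p := x₀) (x := y) (z := pprod b k r) (by simp only [dist_eq_norm]; linarith)
    rw [dist_eq_norm, dist_eq_norm, ← hpre] at this
    exact this.not_ge ((hd k hk).2 _ (hb (k + 1) k.succ_pos hk))

theorem exists_pos_isGreedyRun_near (hfin : (Gs m : Set (Iso V)).Finite)
    (hfree : ∀ h ∈ Gs m, h x₀ = x₀ → h = 1) (hG0 : Gs 0 = ⊥)
    (hmono : ∀ i < m, Gs i ≤ Gs (i + 1))
    (hCL : ∀ i < m, IsCosetLeaders (Gs i) (Gs (i + 1)) (CL (i + 1)))
    (hMin : InducedLeadersMinimal x₀ Gs CL m) :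
    ∃ δ > (0 : ℝ), ∀ g ∈ Gs m, ∀ r : V, ‖r - g⁻¹ x₀‖ < δ →
      ∀ d : ℕ → Iso V, IsGreedyRun x₀ CL m r d → pprod d m = g := by
  obtain ⟨γ, hγ, hgap⟩ := (hfin.image fun a : Iso V => ‖a x₀ - x₀‖).exists_pos_add_le_of_lt
  refine ⟨γ / 2, half_pos hγ, fun g hg r hr d hd => ?_⟩
  obtain ⟨b, hb, rfl⟩ := exists_isLeaderSeq_pprod_eq hG0 hCL le_rfl hg
  exact pprod_congr <| eq_of_isGreedyRun_near hfree hmono hCL hMin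
    (fun a ha a' ha' => hgap _ ⟨a, ha, rfl⟩ _ ⟨a', ha', rfl⟩) hb (by linarith) hd

theorem decodesCorrectly_of_inducedLeadersMinimal (hfin : (Gs m : Set (Iso V)).Finite)
    (hfree : ∀ h ∈ Gs m, h x₀ = x₀ → h = 1) (hG0 : Gs 0 = ⊥)
    (hmono : ∀ i < m, Gs i ≤ Gs (i + 1))
    (hCL : ∀ i < m, IsCosetLeaders (Gs i) (Gs (i + 1)) (CL (i + 1)))
    (hMin : InducedLeadersMinimal x₀ Gs CL m) : DecodesCorrectly x₀ (Gs m) CL m := by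
  obtain ⟨δ, hδ, hnear⟩ := exists_pos_isGreedyRun_near hfin hfree hG0 hmono hCL hMin
  exact fun g hg => hnear g hg _ (by simpa using hδ)

theorem norm_sub_lt_of_decodesCorrectly
    (hleaders : ∀ i, 0 < i → i ≤ m → (CL i).Finite ∧ (CL i).Nonempty)
    (hmono : ∀ i < m, Gs i ≤ Gs (i + 1))
    (hCL : ∀ i < m, IsCosetLeaders (Gs i) (Gs (i + 1)) (CL (i + 1)))
    (hcor : DecodesCorrectly x₀ (Gs m) CL m) {g : Iso V} (hg : g ∈ Gs m) {d : ℕ → Iso V}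
    (hd : IsGreedyRun x₀ CL m (g⁻¹ x₀) d) {k : ℕ} (hk : k < m) {e : Iso V}
    (he : e ∈ CL (k + 1)) (hne : e ≠ d (k + 1)) :
    ‖d (k + 1) (pprod d k (g⁻¹ x₀)) - x₀‖ < ‖e (pprod d k (g⁻¹ x₀)) - x₀‖ := by
  by_contra! htie
  obtain ⟨d', hd', hagree⟩ :=
    ((hd.mono hk.le).update he fun c hc => htie.trans ((hd k hk).2 c hc)).exists_extend
      (fun i hi hi' => hleaders i (by omega) hi') hk
  have := hd'.isLeaderSeq.eq_of_pprod_eq hmono hCL le_rfl hd.isLeaderSeq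
    ((hcor g hg d' hd').trans (hcor g hg d hd).symm) (k + 1) k.succ_pos hk
  rw [hagree (k + 1) le_rfl, Function.update_self] at this
  exact hne this

theorem norm_sub_lt_of_pprod_ne_one
    (hleaders : ∀ i, 0 < i → i ≤ m → (CL i).Finite ∧ (CL i).Nonempty)
    (hmono : ∀ i < m, Gs i ≤ Gs (i + 1))
    (hCL : ∀ i < m, IsCosetLeaders (Gs i) (Gs (i + 1)) (CL (i + 1)))
    (hcor : DecodesCorrectly x₀ (Gs m) CL m) {g : Iso V} (hg : g ∈ Gs m) {d : ℕ → Iso V}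
    (hd : IsGreedyRun x₀ CL m (g⁻¹ x₀) d) {j : ℕ} (hj : j ≤ m) (hne : pprod d j ≠ 1) :
    ‖pprod d j (g⁻¹ x₀) - x₀‖ < ‖g⁻¹ x₀ - x₀‖ := by
  obtain ⟨i, hi, hij, hdi⟩ : ∃ i, 0 < i ∧ i ≤ j ∧ d i ≠ 1 := by
    by_contra! h
    exact hne (pprod_eq_one h)
  obtain ⟨i, rfl⟩ := Nat.exists_eq_add_one_of_ne_zero hi.ne'
  have hone : ∀ i, 0 < i → i ≤ m → (1 : Iso V) ∈ CL i := fun i hi hi' => one_mem_leaders hCL hi hi'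
  calc ‖pprod d j (g⁻¹ x₀) - x₀‖ ≤ ‖pprod d (i + 1) (g⁻¹ x₀) - x₀‖ :=
        hd.norm_sub_antitone hone hij hj
    _ < ‖pprod d i (g⁻¹ x₀) - x₀‖ := by
        simpa [pprod_succ] using norm_sub_lt_of_decodesCorrectly hleaders hmono hCL hcor hg hd
          (by omega) (hone (i + 1) i.succ_pos (by omega)) hdi.symm
    _ ≤ ‖pprod d 0 (g⁻¹ x₀) - x₀‖ := hd.norm_sub_antitone hone i.zero_le (by omega)
    _ = ‖g⁻¹ x₀ - x₀‖ := rfl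

theorem inducedLeadersMinimal_of_decodesCorrectly
    (hleaders : ∀ i, 0 < i → i ≤ m → (CL i).Finite ∧ (CL i).Nonempty) (hG0 : Gs 0 = ⊥)
    (hmono : ∀ i < m, Gs i ≤ Gs (i + 1))
    (hCL : ∀ i < m, IsCosetLeaders (Gs i) (Gs (i + 1)) (CL (i + 1)))
    (hcor : DecodesCorrectly x₀ (Gs m) CL m) : InducedLeadersMinimal x₀ Gs CL m := by
  intro k _ hk cs hcs
  rw [minimal_iff]
  intro h hh hns
  obtain ⟨b, hb, hbk, hbm⟩ := exists_isLeaderSeq_pprod_eq_mul hG0 hCL hk.le hcs (inv_mem hh)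
  set g := pprodRange cs k m * h⁻¹
  have hg : g ∈ Gs m := hbm ▸ hb.pprod_mem hmono hCL le_rfl
  obtain ⟨d, hd⟩ := exists_isGreedyRun (x₀ := x₀) (r := g⁻¹ x₀) hleaders
  have hdk : pprod d k = h⁻¹ := by
    rw [← hbk]
    exact pprod_congr fun i hi hi' => hd.isLeaderSeq.eq_of_pprod_eq hmono hCL le_rfl hb
      ((hcor g hg d hd).trans hbm.symm) i hi (by omega)
  have hgy : g⁻¹ x₀ = h ((pprodRange cs k m)⁻¹ x₀) := by
    rw [mul_inv_rev, inv_inv]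
    rfl
  have := norm_sub_lt_of_pprod_ne_one hleaders hmono hCL hcor hg hd hk.le
    (hdk ▸ inv_ne_one.2 fun h1 => hns ⟨hh, by simp [h1]⟩)
  rwa [hdk, hgy, LinearIsometryEquiv.coe_inv, LinearIsometryEquiv.symm_apply_apply] at this

end Decoding

end GroupCode

open GroupCode in
theorem correct_decoding_iff_minimal_induced_general
    {V : Type*} [NormedAddCommGroup V] [InnerProductSpace ℂ V]
    (G : Subgroup (Iso V)) (hGfin : (G : Set (Iso V)).Finite)
    (x₀ : V)
    (hfull : Stab x₀ G = ({1} : Set (Iso V)))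
    (m : ℕ)
    (Gs : ℕ → Subgroup (Iso V)) (CL : ℕ → Set (Iso V))
    (hG0 : Gs 0 = ⊥) (hGm : Gs m = G)
    (hlt : ∀ k < m, Gs k < Gs (k + 1))
    (hCL : ∀ k < m, IsCosetLeaders (Gs k) (Gs (k + 1)) (CL (k + 1))) :
    ((∀ g ∈ G, ∀ d : ℕ → Iso V,
        IsGreedyRun x₀ CL m (g⁻¹ x₀) d → pprod d m = g) ↔
      (∀ k, 1 ≤ k → k < m → ∀ cs : ℕ → Iso V,
        (∀ i, k < i → i ≤ m → cs i ∈ CL i) → Minimal x₀ (Gs k) (pprodRange cs k m))) ∧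
    ((∀ g ∈ G, ∀ d : ℕ → Iso V,
        IsGreedyRun x₀ CL m (g⁻¹ x₀) d → pprod d m = g) →
      ∃ δ > (0 : ℝ), ∀ g ∈ G, ∀ r : V, ‖r - g⁻¹ x₀‖ < δ →
        ∀ d : ℕ → Iso V, IsGreedyRun x₀ CL m r d → pprod d m = g) := by
  subst hGm
  have hfree : ∀ h ∈ Gs m, h x₀ = x₀ → h = 1 := fun h hh hfix =>
    (Set.ext_iff.1 hfull h).1 ⟨hh, hfix⟩
  have hmono : ∀ i < m, Gs i ≤ Gs (i + 1) := fun i hi => (hlt i hi).le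
  have hleaders := leaders_finite_nonempty hGfin hmono hCL
  have hmin_of_cor := inducedLeadersMinimal_of_decodesCorrectly (x₀ := x₀) hleaders hG0 hmono hCL
  exact ⟨⟨hmin_of_cor, decodesCorrectly_of_inducedLeadersMinimal hGfin hfree hG0 hmono hCL⟩,
    fun hcor => exists_pos_isGreedyRun_near hGfin hfree hG0 hmono hCL (hmin_of_cor hcor)⟩

open GroupCode in
/-- **Theorem (Statement 4).** Correct decoding with no noise is equivalent to
minimality of all induced coset leaders for `G` over each `G_k`; moreover, when these
hold the algorithm decodes correctly with some noise. -/
theorem correct_decoding_iff_minimal_induced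
    {V : Type*} [NormedAddCommGroup V] [InnerProductSpace ℂ V] [FiniteDimensional ℂ V]
    (G : Subgroup (Iso V)) (hGfin : (G : Set (Iso V)).Finite)
    (x₀ : V) (hx₀ : ‖x₀‖ = 1)
    (hfull : Stab x₀ G = ({1} : Set (Iso V)))
    (hnontriv : ∃ g ∈ G, g x₀ ≠ x₀)
    (m : ℕ) (hm : 1 ≤ m)
    (Gs : ℕ → Subgroup (Iso V)) (CL : ℕ → Set (Iso V))
    (hG0 : Gs 0 = ⊥) (hGm : Gs m = G)
    (hlt : ∀ k < m, Gs k < Gs (k + 1))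
    (hCL : ∀ k < m, IsCosetLeaders (Gs k) (Gs (k + 1)) (CL (k + 1))) :
    ((∀ g ∈ G, ∀ d : ℕ → Iso V,
        IsGreedyRun x₀ CL m (g⁻¹ x₀) d → pprod d m = g) ↔
      (∀ k, 1 ≤ k → k < m → ∀ cs : ℕ → Iso V,
        (∀ i, k < i → i ≤ m → cs i ∈ CL i) → Minimal x₀ (Gs k) (pprodRange cs k m))) ∧
    ((∀ g ∈ G, ∀ d : ℕ → Iso V,
        IsGreedyRun x₀ CL m (g⁻¹ x₀) d → pprod d m = g) →
      ∃ δ > (0 : ℝ), ∀ g ∈ G, ∀ r : V, ‖r - g⁻¹ x₀‖ < δ →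
        ∀ d : ℕ → Iso V, IsGreedyRun x₀ CL m r d → pprod d m = g) :=
  correct_decoding_iff_minimal_induced_general G hGfin x₀ hfull m Gs CL hG0 hGm hlt hCL
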